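/- arXiv:1902.06335 — 2 statements merged into one kernel-verified Lean document; each statement's English description precedes it below -/
import Mathlib

section
/- Let (V,C) be a 3SAT instance with n = |C| clauses. In the induced game where a chance node picks each clause c ∈ C uniformly at random, then a clause node (controlled by Player 2, who is indifferent among all her actions) picks one of the three literals of c, and then Player 1, observing only the underlying variable (all literal nodes of the same variable are in one information set), picks true or false, receiving payoff 1 if the chosen assignment satisfies the literal and 0 otherwise: there exists a pair of pure strategies (one for Player 2 choosing literals, one for Player 1 choosing truth values) giving Player 1 expected payoff at least k/n if and only if some truth assignment to V satisfies at least k clauses of C. -/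
/-!
STATEMENT 2: In the game induced by a 3SAT instance (chance picks a clause
uniformly; Player 2, indifferent, picks one of its three literals; Player 1,
observing only the variable, picks true/false and earns 1 iff the chosen
assignment satisfies that literal), there is a pair of pure strategies giving
Player 1 expected payoff at least `k/n` iff some assignment satisfies at least
`k` clauses.

A clause is `C c : Fin 3 → V × Bool`, literal `i` of clause `c` being the
variable `(C c i).1` with polarity `(C c i).2`; assignment `φ` satisfies it
iff `φ (C c i).1 = (C c i).2`.
-/

theorem pure_strategies_iff_maxsat {V : Type*} (m : ℕ) (hm : 0 < m)
    (C : Fin m → Fin 3 → V × Bool) (k : ℕ) :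
    (∃ (g : Fin m → Fin 3) (φ : V → Bool),
        (k : ℝ) / m ≤
          ((Finset.univ.filter fun c : Fin m =>
              φ (C c (g c)).1 = (C c (g c)).2).card : ℝ) / m) ↔
      ∃ φ : V → Bool,
        k ≤ (Finset.univ.filter fun c : Fin m => ∃ i : Fin 3, φ (C c i).1 = (C c i).2).card := by
  have hm' : (0:ℝ) < m := by exact_mod_cast hm
  constructor
  · rintro ⟨g, φ, h⟩
    refine ⟨φ, ?_⟩
    have hle : (k:ℝ) ≤ ((Finset.univ.filter fun c : Fin m =>
        φ (C c (g c)).1 = (C c (g c)).2).card : ℝ) := by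
      have := (div_le_div_iff_of_pos_right hm').mp h
      exact this
    have hcard : (Finset.univ.filter fun c : Fin m =>
        φ (C c (g c)).1 = (C c (g c)).2).card ≤
        (Finset.univ.filter fun c : Fin m => ∃ i : Fin 3, φ (C c i).1 = (C c i).2).card := by
      apply Finset.card_le_card
      intro c hc
      simp only [Finset.mem_filter, Finset.mem_univ, true_and] at hc ⊢
      exact ⟨g c, hc⟩
    have : (k:ℝ) ≤ ((Finset.univ.filter fun c : Fin m =>
        ∃ i : Fin 3, φ (C c i).1 = (C c i).2).card : ℝ) :=
      hle.trans (by exact_mod_cast hcard)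
    exact_mod_cast this
  · rintro ⟨φ, h⟩
    classical
    refine ⟨fun c => if hc : ∃ i : Fin 3, φ (C c i).1 = (C c i).2 then hc.choose else 0, φ, ?_⟩
    have hsub : (Finset.univ.filter fun c : Fin m => ∃ i : Fin 3, φ (C c i).1 = (C c i).2) ⊆
        Finset.univ.filter fun c : Fin m =>
          φ (C c (if hc : ∃ i : Fin 3, φ (C c i).1 = (C c i).2 then hc.choose else 0)).1 =
            (C c (if hc : ∃ i : Fin 3, φ (C c i).1 = (C c i).2 then hc.choose else 0)).2 := by
      intro c hc
      simp only [Finset.mem_filter, Finset.mem_univ, true_and] at hc ⊢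
      rw [dif_pos hc]
      exact hc.choose_spec
    have hk : k ≤ (Finset.univ.filter fun c : Fin m =>
        φ (C c (if hc : ∃ i : Fin 3, φ (C c i).1 = (C c i).2 then hc.choose else 0)).1 =
          (C c (if hc : ∃ i : Fin 3, φ (C c i).1 = (C c i).2 then hc.choose else 0)).2).card :=
      h.trans (Finset.card_le_card hsub)
    gcongr
end

section
/- In the game of the previous construction, if some mixed strategy profile achieves expected payoff k/n for Player 1, then some pure strategy profile also achieves expected payoff at least k/n; consequently the optimal expected payoff of Player 1 equals (max number of simultaneously satisfiable clauses)/n. -/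
/-!
Player 1's expected payoff against a product of mixed strategies is a convex combination of
pure payoffs, so it never exceeds the best pure payoff. Among pure profiles, Player 2 may point at
a satisfied literal of every clause that has one, so with assignment `φ` the best payoff is the
fraction of clauses that `φ` satisfies; maximising over `φ` gives MAXSAT / n.
-/

/-- Player 1's payoff under the pure profile `(g, φ)`: the fraction of clauses
whose literal chosen by Player 2 is satisfied by Player 1's assignment. -/
noncomputable def purePayoff {V : Type*} {m : ℕ} (C : Fin m → Fin 3 → V × Bool)
    (g : Fin m → Fin 3) (φ : V → Bool) : ℝ :=
  ((Finset.univ.filter fun c : Fin m => φ (C c (g c)).1 = (C c (g c)).2).card : ℝ) / m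

open Finset

section Mixing

variable {α β : Type*} [Fintype α] [Fintype β] {μ : α → ℝ} {ν : β → ℝ}

theorem sum_sum_mul_mul_le_of_le (hμ : ∀ a, 0 ≤ μ a) (hν : ∀ b, 0 ≤ ν b)
    (hμ1 : ∑ a, μ a = 1) (hν1 : ∑ b, ν b = 1) {f : α → β → ℝ} {M : ℝ} (hf : ∀ a b, f a b ≤ M) :
    ∑ a, ∑ b, μ a * ν b * f a b ≤ M :=
  calc ∑ a, ∑ b, μ a * ν b * f a b
      ≤ ∑ a, ∑ b, μ a * ν b * M := by
        gcongr with a _ b _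
        · exact mul_nonneg (hμ a) (hν b)
        · exact hf a b
    _ = M := by simp_rw [mul_assoc, ← mul_sum, ← sum_mul, hν1, one_mul, hμ1, one_mul]

theorem exists_sum_sum_mul_mul_le (hμ : ∀ a, 0 ≤ μ a) (hν : ∀ b, 0 ≤ ν b)
    (hμ1 : ∑ a, μ a = 1) (hν1 : ∑ b, ν b = 1) (f : α → β → ℝ) :
    ∃ a b, ∑ a', ∑ b', μ a' * ν b' * f a' b' ≤ f a b := by
  have : Nonempty α := univ_nonempty_iff.mp (nonempty_of_sum_ne_zero (hμ1 ▸ one_ne_zero))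
  have : Nonempty β := univ_nonempty_iff.mp (nonempty_of_sum_ne_zero (hν1 ▸ one_ne_zero))
  obtain ⟨p, hp⟩ := Finite.exists_max fun p : α × β => f p.1 p.2
  exact ⟨p.1, p.2, sum_sum_mul_mul_le_of_le hμ hν hμ1 hν1 fun a b => hp (a, b)⟩

end Mixing

section Clauses

variable {V : Type*} {m : ℕ} (C : Fin m → Fin 3 → V × Bool)

def satisfiedClauses (φ : V → Bool) : Finset (Fin m) :=
  univ.filter fun c : Fin m => ∃ i : Fin 3, φ (C c i).1 = (C c i).2

theorem purePayoff_le (g : Fin m → Fin 3) (φ : V → Bool) :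
    purePayoff C g φ ≤ (#(satisfiedClauses C φ) : ℝ) / m := by
  refine div_le_div_of_nonneg_right (Nat.cast_le.mpr (card_le_card ?_)) m.cast_nonneg
  exact monotone_filter_right _ fun c _ hc => ⟨g c, hc⟩

theorem exists_purePayoff_eq (φ : V → Bool) :
    ∃ g : Fin m → Fin 3, purePayoff C g φ = (#(satisfiedClauses C φ) : ℝ) / m := by
  have hpick : ∀ c, ∃ i : Fin 3,
      (∃ j : Fin 3, φ (C c j).1 = (C c j).2) → φ (C c i).1 = (C c i).2 := fun c => by
    by_cases h : ∃ j : Fin 3, φ (C c j).1 = (C c j).2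
    · exact h.imp fun _ hj _ => hj
    · exact ⟨0, fun h' => absurd h' h⟩
  choose g hg using hpick
  refine ⟨g, ?_⟩
  unfold purePayoff satisfiedClauses
  congr 3
  exact filter_congr fun c _ => ⟨fun hc => ⟨g c, hc⟩, hg c⟩

theorem isGreatest_purePayoff [Fintype V] [DecidableEq V] :
    IsGreatest {r : ℝ | ∃ (g : Fin m → Fin 3) (φ : V → Bool), r = purePayoff C g φ}
      ((univ.sup fun φ : V → Bool => #(satisfiedClauses C φ) : ℕ) / (m : ℝ)) := by
  constructor
  · obtain ⟨φ, -, hφ⟩ := exists_mem_eq_sup univ univ_nonempty fun φ => #(satisfiedClauses C φ)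
    obtain ⟨g, hg⟩ := exists_purePayoff_eq C φ
    exact ⟨g, φ, by rw [hφ, hg]⟩
  · rintro r ⟨g, φ, rfl⟩
    refine (purePayoff_le C g φ).trans (div_le_div_of_nonneg_right ?_ m.cast_nonneg)
    exact_mod_cast le_sup (f := fun φ => #(satisfiedClauses C φ)) (mem_univ φ)

end Clauses

theorem mixed_purification_and_value_general {V : Type*} [Fintype V] [DecidableEq V]
    (m : ℕ) (C : Fin m → Fin 3 → V × Bool) :
    (∀ (μ : (Fin m → Fin 3) → ℝ) (ν : (V → Bool) → ℝ),
        (∀ g, 0 ≤ μ g) → (∀ φ, 0 ≤ ν φ) →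
        (∑ g : Fin m → Fin 3, μ g) = 1 → (∑ φ : V → Bool, ν φ) = 1 →
        ∃ (g : Fin m → Fin 3) (φ : V → Bool),
          (∑ g' : Fin m → Fin 3, ∑ φ' : V → Bool, μ g' * ν φ' * purePayoff C g' φ') ≤
            purePayoff C g φ) ∧
      IsGreatest {r : ℝ | ∃ (g : Fin m → Fin 3) (φ : V → Bool), r = purePayoff C g φ}
        (((Finset.univ.sup fun φ : V → Bool =>
            (Finset.univ.filter fun c : Fin m => ∃ i : Fin 3, φ (C c i).1 = (C c i).2).card) : ℕ)
          / (m : ℝ)) :=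
  ⟨fun _ _ hμ hν hμ1 hν1 => exists_sum_sum_mul_mul_le hμ hν hμ1 hν1 (purePayoff C),
    isGreatest_purePayoff C⟩

theorem mixed_purification_and_value {V : Type*} [Fintype V] [DecidableEq V]
    (m : ℕ) (hm : 0 < m) (C : Fin m → Fin 3 → V × Bool) :
    (∀ (μ : (Fin m → Fin 3) → ℝ) (ν : (V → Bool) → ℝ),
        (∀ g, 0 ≤ μ g) → (∀ φ, 0 ≤ ν φ) →
        (∑ g : Fin m → Fin 3, μ g) = 1 → (∑ φ : V → Bool, ν φ) = 1 →
        ∃ (g : Fin m → Fin 3) (φ : V → Bool),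
          (∑ g' : Fin m → Fin 3, ∑ φ' : V → Bool, μ g' * ν φ' * purePayoff C g' φ') ≤
            purePayoff C g φ) ∧
      IsGreatest {r : ℝ | ∃ (g : Fin m → Fin 3) (φ : V → Bool), r = purePayoff C g φ}
        (((Finset.univ.sup fun φ : V → Bool =>
            (Finset.univ.filter fun c : Fin m => ∃ i : Fin 3, φ (C c i).1 = (C c i).2).card) : ℕ)
          / (m : ℝ)) :=
  mixed_purification_and_value_general m C
end
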